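/- Let ε₀, μ₀, τ₀, σ₀ > 0 and let (E, H, J, K) solve the abstract weak graphene system on [0, T_fin]. Then for every t ∈ [0, T_fin] one has the combined identity (1/2)·d/dt[ 2τ₀ε₀‖E'(t)‖²_X + σ₀‖T E(t)‖²_Z + μ₀‖τ₀^{1/2} H'(t) + τ₀^{−1/2} H(t)‖²_Y + (μ₀/τ₀)‖H(t)‖²_Y + (2ε₀/τ₀)‖E(t)‖²_X + (2/σ₀)‖J(t)‖²_Z + τ₀μ₀‖H'(t)‖²_Y + (τ₀²/σ₀)‖J'(t)‖²_Z ] + ε₀‖E'(t)‖²_X + (2/(τ₀σ₀))‖J(t)‖²_Z + (τ₀/σ₀)‖J'(t)‖²_Z = μ₀‖H'(t)‖²_Y − ⟨H(t), K'(t)⟩_Y − 2τ₀⟨H'(t), K'(t)⟩_Y − (2/τ₀)⟨K(t), H(t)⟩_Y. -/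

import Mathlib

open scoped RealInnerProductSpace
open Set

/-!
Differentiating the system in time shows that `(E', H', J', K')` satisfies the same relations as
`(E, H, J, K)`; this is legitimate at every point of `[0, T_fin]`, endpoints included, because
`T_fin > 0` makes the interval a set of unique differentiability. The energy is a quadratic form
in `(E, E', H, H', J, J')`, so half its derivative is the associated bilinear form evaluated at
the state and its time derivative. Testing the Ampère relations with `E` and `E'`, the Faraday
relations with `H` and `H'`, and the Drude relations with `J`, `T E'` and `J'`, and adding the
results with suitable weights, turns this bilinear expression into the claimed right-hand side
minus the dissipation terms.
-/

lemma HasDerivAt.eq_of_eqOn {𝕜 V : Type*} [NontriviallyNormedField 𝕜] [NormedAddCommGroup V]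
    [NormedSpace 𝕜 V] {f g : 𝕜 → V} {f' g' : V} {s : Set 𝕜} {t : 𝕜}
    (hs : UniqueDiffWithinAt 𝕜 s t) (ht : t ∈ s) (hf : HasDerivAt f f' t)
    (hg : HasDerivAt g g' t) (hfg : EqOn f g s) : f' = g' :=
  hs.eq_deriv s hf.hasDerivWithinAt (hg.hasDerivWithinAt.congr hfg (hfg ht))

lemma real_inner_sqrt_smul_add_inv_sqrt_smul {V : Type*} [NormedAddCommGroup V]
    [InnerProductSpace ℝ V] {c : ℝ} (hc : 0 < c) (a b a' b' : V) :
    ⟪√c • a + (√c)⁻¹ • b, √c • a' + (√c)⁻¹ • b'⟫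
      = c * ⟪a, a'⟫ + ⟪a, b'⟫ + ⟪b, a'⟫ + c⁻¹ * ⟪b, b'⟫ := by
  have hne : √c ≠ 0 := (Real.sqrt_pos.mpr hc).ne'
  simp only [inner_add_left, inner_add_right, real_inner_smul_left, real_inner_smul_right]
  field_simp
  rw [Real.sq_sqrt hc.le]
  ring

noncomputable section GrapheneSystem

variable {X Y Z : Type*}
  [NormedAddCommGroup X] [InnerProductSpace ℝ X]
  [NormedAddCommGroup Y] [InnerProductSpace ℝ Y]
  [NormedAddCommGroup Z] [InnerProductSpace ℝ Z]
  (B : X →L[ℝ] Y) (T : X →L[ℝ] Z) (ε₀ μ₀ τ₀ σ₀ : ℝ)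

/-- The relations (i)–(iii) at one instant; `e'`, `h'`, `j'` play the role of the time
derivatives of `e`, `h`, `j`. -/
structure GrapheneRelations (e e' : X) (h h' : Y) (j j' : Z) (k : Y) : Prop where
  ampere : ∀ φ : X, ε₀ * ⟪e', φ⟫ = ⟪h, B φ⟫ - ⟪j, T φ⟫
  faraday : μ₀ • h' = -(B e) - k
  drude : τ₀ • j' + j = σ₀ • T e

def grapheneEnergy (e e' : X) (h h' : Y) (j j' : Z) : ℝ :=
  2 * τ₀ * ε₀ * ‖e'‖ ^ 2 + σ₀ * ‖T e‖ ^ 2 + μ₀ * ‖√τ₀ • h' + (√τ₀)⁻¹ • h‖ ^ 2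
    + (μ₀ / τ₀) * ‖h‖ ^ 2 + (2 * ε₀ / τ₀) * ‖e‖ ^ 2 + (2 / σ₀) * ‖j‖ ^ 2
    + τ₀ * μ₀ * ‖h'‖ ^ 2 + (τ₀ ^ 2 / σ₀) * ‖j'‖ ^ 2

def grapheneEnergyRate (e e' e'' : X) (h h' h'' : Y) (j j' j'' : Z) : ℝ :=
  2 * τ₀ * ε₀ * ⟪e', e''⟫ + σ₀ * ⟪T e, T e'⟫
    + μ₀ * ⟪√τ₀ • h' + (√τ₀)⁻¹ • h, √τ₀ • h'' + (√τ₀)⁻¹ • h'⟫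
    + (μ₀ / τ₀) * ⟪h, h'⟫ + (2 * ε₀ / τ₀) * ⟪e, e'⟫ + (2 / σ₀) * ⟪j, j'⟫
    + τ₀ * μ₀ * ⟪h', h''⟫ + (τ₀ ^ 2 / σ₀) * ⟪j', j''⟫

variable {B T ε₀ μ₀ τ₀ σ₀}

theorem hasDerivAt_grapheneEnergy {E : ℝ → X} {H : ℝ → Y} {J : ℝ → Z} {t : ℝ}
    (hE : DifferentiableAt ℝ E t) (hE' : DifferentiableAt ℝ (deriv E) t)
    (hH : DifferentiableAt ℝ H t) (hH' : DifferentiableAt ℝ (deriv H) t)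
    (hJ : DifferentiableAt ℝ J t) (hJ' : DifferentiableAt ℝ (deriv J) t) :
    HasDerivAt
      (fun s ↦ grapheneEnergy T ε₀ μ₀ τ₀ σ₀ (E s) (deriv E s) (H s) (deriv H s) (J s) (deriv J s))
      (2 * grapheneEnergyRate T ε₀ μ₀ τ₀ σ₀ (E t) (deriv E t) (deriv (deriv E) t)
        (H t) (deriv H t) (deriv (deriv H) t) (J t) (deriv J t) (deriv (deriv J) t)) t := by
  have hTE : HasDerivAt (fun s ↦ T (E s)) (T (deriv E t)) t :=
    T.hasFDerivAt.comp_hasDerivAt t hE.hasDerivAt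
  have hG : HasDerivAt (fun s ↦ √τ₀ • deriv H s + (√τ₀)⁻¹ • H s)
      (√τ₀ • deriv (deriv H) t + (√τ₀)⁻¹ • deriv H t) t :=
    (hH'.hasDerivAt.const_smul _).add (hH.hasDerivAt.const_smul _)
  have := (((((((hE'.hasDerivAt.norm_sq.const_mul (2 * τ₀ * ε₀)).add
    (hTE.norm_sq.const_mul σ₀)).add (hG.norm_sq.const_mul μ₀)).add
    (hH.hasDerivAt.norm_sq.const_mul (μ₀ / τ₀))).add
    (hE.hasDerivAt.norm_sq.const_mul (2 * ε₀ / τ₀))).add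
    (hJ.hasDerivAt.norm_sq.const_mul (2 / σ₀))).add
    (hH'.hasDerivAt.norm_sq.const_mul (τ₀ * μ₀))).add
    (hJ'.hasDerivAt.norm_sq.const_mul (τ₀ ^ 2 / σ₀))
  refine this.congr_deriv ?_
  unfold grapheneEnergyRate
  ring

theorem GrapheneRelations.deriv {E : ℝ → X} {H K : ℝ → Y} {J : ℝ → Z} {s : Set ℝ} {t : ℝ}
    (hs : UniqueDiffWithinAt ℝ s t) (ht : t ∈ s)
    (hE : DifferentiableAt ℝ E t) (hE' : DifferentiableAt ℝ (deriv E) t)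
    (hH : DifferentiableAt ℝ H t) (hH' : DifferentiableAt ℝ (deriv H) t)
    (hJ : DifferentiableAt ℝ J t) (hJ' : DifferentiableAt ℝ (deriv J) t)
    (hK : DifferentiableAt ℝ K t)
    (hrel : ∀ u ∈ s, GrapheneRelations B T ε₀ μ₀ τ₀ σ₀
      (E u) (deriv E u) (H u) (deriv H u) (J u) (deriv J u) (K u)) :
    GrapheneRelations B T ε₀ μ₀ τ₀ σ₀ (deriv E t) (deriv (deriv E) t) (deriv H t)
      (deriv (deriv H) t) (deriv J t) (deriv (deriv J) t) (deriv K t) where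
  ampere φ := by
    simpa using HasDerivAt.eq_of_eqOn hs ht
      ((hE'.hasDerivAt.inner ℝ (hasDerivAt_const t φ)).const_mul ε₀)
      ((hH.hasDerivAt.inner ℝ (hasDerivAt_const t (B φ))).sub
        (hJ.hasDerivAt.inner ℝ (hasDerivAt_const t (T φ))))
      fun u hu ↦ (hrel u hu).ampere φ
  faraday := HasDerivAt.eq_of_eqOn hs ht (hH'.hasDerivAt.const_smul μ₀)
    ((B.hasFDerivAt.comp_hasDerivAt t hE.hasDerivAt).neg.sub hK.hasDerivAt)
    fun u hu ↦ (hrel u hu).faraday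
  drude := HasDerivAt.eq_of_eqOn hs ht ((hJ'.hasDerivAt.const_smul τ₀).add hJ.hasDerivAt)
    ((T.hasFDerivAt.comp_hasDerivAt t hE.hasDerivAt).const_smul σ₀)
    fun u hu ↦ (hrel u hu).drude

theorem GrapheneRelations.grapheneEnergyRate_add_dissipation
    {e e' e'' : X} {h h' h'' k k' : Y} {j j' j'' : Z} (hτ₀ : 0 < τ₀) (hσ₀ : σ₀ ≠ 0)
    (hrel : GrapheneRelations B T ε₀ μ₀ τ₀ σ₀ e e' h h' j j' k)
    (hrel' : GrapheneRelations B T ε₀ μ₀ τ₀ σ₀ e' e'' h' h'' j' j'' k') :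
    grapheneEnergyRate T ε₀ μ₀ τ₀ σ₀ e e' e'' h h' h'' j j' j'' + ε₀ * ‖e'‖ ^ 2
        + (2 / (τ₀ * σ₀)) * ‖j‖ ^ 2 + (τ₀ / σ₀) * ‖j'‖ ^ 2
      = μ₀ * ‖h'‖ ^ 2 - ⟪h, k'⟫ - 2 * τ₀ * ⟪h', k'⟫ - (2 / τ₀) * ⟪k, h⟫ := by
  have ampere_e := hrel.ampere e
  have ampere_e' := hrel.ampere e'
  have ampere'_e' := hrel'.ampere e'
  have faraday_h := congrArg (⟪h, ·⟫) hrel.faraday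
  have faraday'_h := congrArg (⟪h, ·⟫) hrel'.faraday
  have faraday'_h' := congrArg (⟪h', ·⟫) hrel'.faraday
  have drude_j := congrArg (⟪j, ·⟫) hrel.drude
  have drude_Te' := congrArg (⟪·, T e'⟫) hrel.drude
  have drude'_j' := congrArg (⟪j', ·⟫) hrel'.drude
  simp only [inner_add_left, inner_add_right, inner_sub_right, inner_neg_right,
    real_inner_smul_left, real_inner_smul_right, real_inner_self_eq_norm_sq] at *
  rw [real_inner_comm e e'] at ampere_e
  rw [real_inner_comm e' e''] at ampere'_e'
  rw [grapheneEnergyRate, real_inner_sqrt_smul_add_inv_sqrt_smul hτ₀, real_inner_comm h k,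
    real_inner_self_eq_norm_sq]
  -- The energy identities of the differentiated system (weight `2 τ₀`) and of the system
  -- (weight `2 / τ₀`), plus the cross terms coupling the two.
  linear_combination (norm := skip) 2 * τ₀ * ampere'_e' + ampere_e' + 2 * τ₀ * faraday'_h'
    + faraday'_h + (2 / τ₀) * ampere_e + (2 / τ₀) * faraday_h
    + (2 / (τ₀ * σ₀)) * drude_j - drude_Te' + (τ₀ / σ₀) * drude'_j'
  field_simp
  ring

end GrapheneSystem

theorem graphene_combined_identity_general
    {X Y Z : Type*}
    [NormedAddCommGroup X] [InnerProductSpace ℝ X]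
    [NormedAddCommGroup Y] [InnerProductSpace ℝ Y]
    [NormedAddCommGroup Z] [InnerProductSpace ℝ Z]
    (B : X →L[ℝ] Y) (T : X →L[ℝ] Z)
    (ε₀ μ₀ τ₀ σ₀ Tfin : ℝ)
    (hτ₀ : 0 < τ₀) (hσ₀ : 0 < σ₀) (hTfin : 0 < Tfin)
    (E : ℝ → X) (H : ℝ → Y) (J : ℝ → Z) (K : ℝ → Y)
    (hE : ContDiff ℝ 2 E) (hH : ContDiff ℝ 2 H) (hJ : ContDiff ℝ 2 J)
    (hK : ContDiff ℝ 1 K)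
    (heq1 : ∀ t ∈ Set.Icc (0:ℝ) Tfin, ∀ φ : X,
      ε₀ * ⟪deriv E t, φ⟫ = ⟪H t, B φ⟫ - ⟪J t, T φ⟫)
    (heq2 : ∀ t ∈ Set.Icc (0:ℝ) Tfin, μ₀ • deriv H t = -(B (E t)) - K t)
    (heq3 : ∀ t ∈ Set.Icc (0:ℝ) Tfin, τ₀ • deriv J t + J t = σ₀ • T (E t)) :
    ∀ t ∈ Set.Icc (0:ℝ) Tfin,
      (1/2) * deriv (fun s => 2 * τ₀ * ε₀ * ‖deriv E s‖^2 + σ₀ * ‖T (E s)‖^2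
          + μ₀ * ‖Real.sqrt τ₀ • deriv H s + (Real.sqrt τ₀)⁻¹ • H s‖^2
          + (μ₀/τ₀) * ‖H s‖^2 + (2 * ε₀/τ₀) * ‖E s‖^2 + (2/σ₀) * ‖J s‖^2
          + τ₀ * μ₀ * ‖deriv H s‖^2 + (τ₀^2/σ₀) * ‖deriv J s‖^2) t
        + ε₀ * ‖deriv E t‖^2 + (2/(τ₀ * σ₀)) * ‖J t‖^2 + (τ₀/σ₀) * ‖deriv J t‖^2
      = μ₀ * ‖deriv H t‖^2 - ⟪H t, deriv K t⟫ - 2 * τ₀ * ⟪deriv H t, deriv K t⟫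
          - (2/τ₀) * ⟪K t, H t⟫ := by
  intro t ht
  have hrel : ∀ s ∈ Icc 0 Tfin, GrapheneRelations B T ε₀ μ₀ τ₀ σ₀
      (E s) (deriv E s) (H s) (deriv H s) (J s) (deriv J s) (K s) :=
    fun s hs ↦ ⟨heq1 s hs, heq2 s hs, heq3 s hs⟩
  have hE₁ := hE.differentiable two_ne_zero t
  have hE₂ := hE.differentiable_deriv_two t
  have hH₁ := hH.differentiable two_ne_zero t
  have hH₂ := hH.differentiable_deriv_two t
  have hJ₁ := hJ.differentiable two_ne_zero t
  have hJ₂ := hJ.differentiable_deriv_two t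
  have hrel' := GrapheneRelations.deriv (uniqueDiffOn_Icc hTfin t ht) ht
    hE₁ hE₂ hH₁ hH₂ hJ₁ hJ₂ (hK.differentiable one_ne_zero t) hrel
  change (1/2) * deriv (fun s ↦ grapheneEnergy T ε₀ μ₀ τ₀ σ₀
    (E s) (deriv E s) (H s) (deriv H s) (J s) (deriv J s)) t + _ + _ + _ = _
  rw [(hasDerivAt_grapheneEnergy hE₁ hE₂ hH₁ hH₂ hJ₁ hJ₂).deriv]
  linarith [(hrel t ht).grapheneEnergyRate_add_dissipation hτ₀ hσ₀.ne' hrel']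

/-- The combined identity (2.26) of the stability proof. -/
theorem graphene_combined_identity
    {X Y Z : Type*}
    [NormedAddCommGroup X] [InnerProductSpace ℝ X]
    [NormedAddCommGroup Y] [InnerProductSpace ℝ Y]
    [NormedAddCommGroup Z] [InnerProductSpace ℝ Z]
    (B : X →L[ℝ] Y) (T : X →L[ℝ] Z)
    (ε₀ μ₀ τ₀ σ₀ Tfin : ℝ)
    (hε₀ : 0 < ε₀) (hμ₀ : 0 < μ₀) (hτ₀ : 0 < τ₀) (hσ₀ : 0 < σ₀) (hTfin : 0 < Tfin)
    (E : ℝ → X) (H : ℝ → Y) (J : ℝ → Z) (K : ℝ → Y)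
    (hE : ContDiff ℝ 2 E) (hH : ContDiff ℝ 2 H) (hJ : ContDiff ℝ 2 J)
    (hK : ContDiff ℝ 1 K)
    (heq1 : ∀ t ∈ Set.Icc (0:ℝ) Tfin, ∀ φ : X,
      ε₀ * ⟪deriv E t, φ⟫ = ⟪H t, B φ⟫ - ⟪J t, T φ⟫)
    (heq2 : ∀ t ∈ Set.Icc (0:ℝ) Tfin, μ₀ • deriv H t = -(B (E t)) - K t)
    (heq3 : ∀ t ∈ Set.Icc (0:ℝ) Tfin, τ₀ • deriv J t + J t = σ₀ • T (E t)) :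
    ∀ t ∈ Set.Icc (0:ℝ) Tfin,
      (1/2) * deriv (fun s => 2 * τ₀ * ε₀ * ‖deriv E s‖^2 + σ₀ * ‖T (E s)‖^2
          + μ₀ * ‖Real.sqrt τ₀ • deriv H s + (Real.sqrt τ₀)⁻¹ • H s‖^2
          + (μ₀/τ₀) * ‖H s‖^2 + (2 * ε₀/τ₀) * ‖E s‖^2 + (2/σ₀) * ‖J s‖^2
          + τ₀ * μ₀ * ‖deriv H s‖^2 + (τ₀^2/σ₀) * ‖deriv J s‖^2) t
        + ε₀ * ‖deriv E t‖^2 + (2/(τ₀ * σ₀)) * ‖J t‖^2 + (τ₀/σ₀) * ‖deriv J t‖^2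
      = μ₀ * ‖deriv H t‖^2 - ⟪H t, deriv K t⟫ - 2 * τ₀ * ⟪deriv H t, deriv K t⟫
          - (2/τ₀) * ⟪K t, H t⟫ :=
  graphene_combined_identity_general B T ε₀ μ₀ τ₀ σ₀ Tfin hτ₀ hσ₀ hTfin E H J K hE hH hJ hK heq1
    heq2 heq3
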